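/- arXiv:1704.00642 — 6 statements merged into one kernel-verified Lean document; each statement's English description precedes it below -/
import Mathlib

section
/- Let d ≥ 1, let η : ℝ^d → ℝ be continuous, suppose that S := {x ∈ ℝ^d : η(x) = 1/2} is non-empty, and suppose that for some ε > 0 the function η is continuously differentiable on the open set S + B_ε(0) with gradient ∇η(x₀) ≠ 0 for every x₀ ∈ S. Then the ε-neighbourhood of S admits the normal representation S + B_ε(0) = { x₀ + t·∇η(x₀)/‖∇η(x₀)‖ : x₀ ∈ S, |t| < ε }. -/
/-!
The inclusion `⊇` holds because `t • ∇η(x₀)/‖∇η(x₀)‖` has norm `|t|`. Conversely, a point `x`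
within `ε` of the closed set `S` has a nearest point `x₀ ∈ S`. Minimising `‖y - x‖²` on the level
set `{η = 1/2}` and applying Lagrange's multiplier rule at the regular point `x₀` shows that
`x - x₀` is parallel to `∇η(x₀)`; its length `dist x x₀ < ε` is the parameter `|t|`.
-/

open InnerProductSpace Metric Pointwise Topology

theorem infDist_lt_of_mem_add_ball {E : Type*} [SeminormedAddCommGroup E] {s : Set E} {x : E}
    {ε : ℝ} (hx : x ∈ s + ball 0 ε) : infDist x s < ε := by
  obtain ⟨y, hy, u, hu, rfl⟩ := hx
  refine (infDist_le_dist_of_mem hy).trans_lt ?_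
  simpa [dist_eq_norm] using hu

theorem exists_abs_eq_dist_and_eq_add_smul_unit {E : Type*} [NormedAddCommGroup E]
    [NormedSpace ℝ E] {g x x₀ : E} {c : ℝ} (hg : g ≠ 0) (h : x - x₀ = c • g) :
    ∃ t : ℝ, |t| = dist x x₀ ∧ x = x₀ + t • (‖g‖⁻¹ • g) := by
  refine ⟨c * ‖g‖, ?_, ?_⟩
  · rw [dist_eq_norm, h, norm_smul, Real.norm_eq_abs, abs_mul, abs_norm]
  · rw [smul_smul, mul_assoc, mul_inv_cancel₀ (norm_ne_zero_iff.mpr hg), mul_one, ← h,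
      add_sub_cancel]

theorem exists_sub_eq_smul_of_isMinOn_dist {E : Type*} [NormedAddCommGroup E]
    [InnerProductSpace ℝ E] [CompleteSpace E] {f : E → ℝ} {g x x₀ : E}
    (hf : HasStrictFDerivAt f (toDual ℝ E g) x₀) (hg : g ≠ 0)
    (hmin : IsMinOn (dist x) {y | f y = f x₀} x₀) : ∃ c : ℝ, x - x₀ = c • g := by
  have hφ : HasStrictFDerivAt (fun y => ‖y - x‖ ^ 2) (2 • innerSL ℝ (x₀ - x)) x₀ := by
    simpa using
      (hasStrictFDerivAt_norm_sq (x₀ - x)).comp x₀ ((hasStrictFDerivAt_id x₀).sub_const x)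
  have hextr : IsLocalExtrOn (fun y => ‖y - x‖ ^ 2) {y | f y = f x₀} x₀ := by
    refine Or.inl (IsMinOn.localize fun y hy => ?_)
    simp only [Set.mem_ofPred_eq, ← dist_eq_norm, dist_comm _ x]
    gcongr
    exact hmin hy
  obtain ⟨a, b, hab, hsum⟩ := hextr.exists_multipliers_of_hasStrictFDerivAt_1d hf hφ
  have hcomb : a • g + (2 * b) • (x₀ - x) = 0 := by
    refine ext_inner_right ℝ fun v => ?_
    have hv := congrArg (· v) hsum
    simp only [add_apply, smul_apply, toDual_apply_apply,
      innerSL_apply_apply, smul_eq_mul, zero_apply] at hv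
    simp only [inner_add_left, inner_smul_left, RCLike.conj_to_real, inner_zero_left]
    linear_combination hv
  have hb : b ≠ 0 := by
    rintro rfl
    have ha : a ≠ 0 := by simpa using hab
    simp [ha, hg] at hcomb
  have h2b : 2 * b ≠ 0 := mul_ne_zero two_ne_zero hb
  refine ⟨a / (2 * b), smul_right_injective E h2b ?_⟩
  simp only [smul_smul, mul_div_cancel₀ _ h2b]
  linear_combination (norm := module) -hcomb

theorem stmt0_general (d : ℕ) (η : EuclideanSpace ℝ (Fin d) → ℝ)
    (hcont : Continuous η)
    (S : Set (EuclideanSpace ℝ (Fin d)))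
    (hS : S = {x | η x = 1/2}) (hSne : S.Nonempty)
    (ε : ℝ) (hε : 0 < ε)
    (hdiff : ContDiffOn ℝ 1 η (S + Metric.ball (0 : EuclideanSpace ℝ (Fin d)) ε))
    (hgrad : ∀ x₀ ∈ S, gradient η x₀ ≠ 0) :
    S + Metric.ball (0 : EuclideanSpace ℝ (Fin d)) ε =
      {x | ∃ x₀ ∈ S, ∃ t : ℝ, |t| < ε ∧
        x = x₀ + t • (‖gradient η x₀‖⁻¹ • gradient η x₀)} := by
  have hSclosed : IsClosed S := hS ▸ isClosed_eq hcont continuous_const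
  refine Set.Subset.antisymm (fun x hx => ?_) ?_
  · obtain ⟨x₀, hx₀, hnear⟩ := hSclosed.exists_infDist_eq_dist hSne x
    have hU : S + ball 0 ε ∈ 𝓝 x₀ :=
      isOpen_ball.add_left.mem_nhds ⟨x₀, hx₀, 0, mem_ball_self hε, add_zero x₀⟩
    have hstrict : HasStrictFDerivAt η (toDual ℝ _ (gradient η x₀)) x₀ := by
      rw [toDual_gradient]
      exact (hdiff.contDiffAt hU).hasStrictFDerivAt one_ne_zero
    have hlevel : {y | η y = η x₀} = S := by
      rw [hS] at hx₀ ⊢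
      rw [hx₀]
    have hmin : IsMinOn (dist x) {y | η y = η x₀} x₀ := fun y hy =>
      hnear ▸ infDist_le_dist_of_mem (hlevel ▸ hy)
    obtain ⟨c, hc⟩ := exists_sub_eq_smul_of_isMinOn_dist hstrict (hgrad x₀ hx₀) hmin
    obtain ⟨t, ht, rfl⟩ := exists_abs_eq_dist_and_eq_add_smul_unit (hgrad x₀ hx₀) hc
    exact ⟨x₀, hx₀, t, ht ▸ hnear ▸ infDist_lt_of_mem_add_ball hx, rfl⟩
  · rintro _ ⟨x₀, hx₀, t, ht, rfl⟩
    refine Set.add_mem_add hx₀ ?_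
    rwa [mem_ball_zero_iff, norm_smul, norm_smul, norm_inv, norm_norm,
      inv_mul_cancel₀ (norm_ne_zero_iff.mpr (hgrad x₀ hx₀)), mul_one, Real.norm_eq_abs]

theorem stmt0 (d : ℕ) (hd : 1 ≤ d) (η : EuclideanSpace ℝ (Fin d) → ℝ)
    (hcont : Continuous η)
    (S : Set (EuclideanSpace ℝ (Fin d)))
    (hS : S = {x | η x = 1/2}) (hSne : S.Nonempty)
    (ε : ℝ) (hε : 0 < ε)
    (hdiff : ContDiffOn ℝ 1 η (S + Metric.ball (0 : EuclideanSpace ℝ (Fin d)) ε))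
    (hgrad : ∀ x₀ ∈ S, gradient η x₀ ≠ 0) :
    S + Metric.ball (0 : EuclideanSpace ℝ (Fin d)) ε =
      {x | ∃ x₀ ∈ S, ∃ t : ℝ, |t| < ε ∧
        x = x₀ + t • (‖gradient η x₀‖⁻¹ • gradient η x₀)} :=
  stmt0_general d η hcont S hS hSne ε hε hdiff hgrad
end

section
/- Let d ≥ 1, let η : ℝ^d → ℝ be continuous, suppose that S := {x ∈ ℝ^d : η(x) = 1/2} is non-empty, that for some ε > 0 the function η is twice continuously differentiable on S + B_ε(0), that ∇η(x₀) ≠ 0 for every x₀ ∈ S, and that ε ≤ inf_{x₀ ∈ S} ‖∇η(x₀)‖ / sup_{z ∈ B_{2ε}(x₀) ∩ (S + B_ε(0))} ‖Hess η(z)‖_op. Then the map g : S × (−ε, ε) → ℝ^d defined by g(x₀, t) := x₀ + t·∇η(x₀)/‖∇η(x₀)‖ is injective, and its image is exactly S + B_ε(0). -/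
open MeasureTheory Pointwise

noncomputable section

/-!
Write `ν = ∇η / ‖∇η‖` for the unit normal of the level set `S`. For `a, b ∈ S` with
`‖b - a‖ < 2ε` the segment `[a, b]` stays in `S + B_ε(0)` and in `B_{2ε}(a)`, so `η b = η a`
and the second-order Taylor bound along it give `2ε |⟪ν a, b - a⟫| ≤ ‖b - a‖²`. If
`x + t ν x = y + s ν y` with `|t|, |s| < ε`, pairing `y - x = t ν x - s ν y` with itself and
using this estimate at both ends gives `‖y - x‖² ≤ (|t| + |s|) ‖y - x‖² / (2ε) < ‖y - x‖²`
unless `x = y`. Conversely, a point `y` at distance `< ε` from the closed set `S` has a nearest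
point `x ∈ S`, and by Lagrange multipliers `y - x` is a multiple of `∇η x`.
-/

open Set Metric RealInnerProductSpace

variable {E : Type*}

section NormedSpace

variable [NormedAddCommGroup E] [NormedSpace ℝ E]

theorem norm_image_sub_sub_fderiv_le {F : Type*} [NormedAddCommGroup F] [NormedSpace ℝ F]
    {f : E → F} {U : Set E} (hU : IsOpen U) (hf : ContDiffOn ℝ 2 f U) {x y : E}
    (hxy : segment ℝ x y ⊆ U) {M : ℝ}
    (hM : ∀ z ∈ segment ℝ x y, ‖fderiv ℝ (fderiv ℝ f) z‖ ≤ M) :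
    ‖f y - f x - fderiv ℝ f x (y - x)‖ ≤ M / 2 * ‖y - x‖ ^ 2 := by
  set v := y - x
  have hseg : ∀ u ∈ Icc (0 : ℝ) 1, x + u • v ∈ segment ℝ x y := fun u hu => by
    rw [segment_eq_image']; exact ⟨u, hu, rfl⟩
  have hf' : ∀ z ∈ segment ℝ x y, HasFDerivAt f (fderiv ℝ f z) z := fun z hz =>
    ((hf.contDiffAt (hU.mem_nhds (hxy hz))).differentiableAt (by norm_num)).hasFDerivAt
  have hf1 : ContDiffOn ℝ 1 (fderiv ℝ f) U := hf.fderiv_of_isOpen hU (by norm_num)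
  have hf'' : ∀ z ∈ segment ℝ x y, HasFDerivWithinAt (fderiv ℝ f)
      (fderiv ℝ (fderiv ℝ f) z) (segment ℝ x y) z := fun z hz =>
    ((hf1.contDiffAt (hU.mem_nhds (hxy hz))).differentiableAt one_ne_zero
      ).hasFDerivAt.hasFDerivWithinAt
  have hlip : ∀ z ∈ segment ℝ x y, ‖fderiv ℝ f z - fderiv ℝ f x‖ ≤ M * ‖z - x‖ := fun z hz =>
    (convex_segment x y).norm_image_sub_le_of_norm_hasFDerivWithin_le hf'' hM
      (left_mem_segment ℝ x y) hz
  -- `g` is fenced in by the parabola `B u = M ‖v‖² u² / 2`, since `‖g' u‖ ≤ M ‖v‖² u = B' u`.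
  set g : ℝ → F := fun u => f (x + u • v) - f x - u • fderiv ℝ f x v
  have hg : ∀ u ∈ Icc (0 : ℝ) 1,
      HasDerivAt g (fderiv ℝ f (x + u • v) v - fderiv ℝ f x v) u := fun u hu => by
    have hline : HasDerivAt (fun u : ℝ => x + u • v) v u := by
      simpa using ((hasDerivAt_id u).smul_const v).const_add x
    exact (((hf' _ (hseg u hu)).comp_hasDerivAt u hline).sub_const _).sub
      (by simpa using (hasDerivAt_id u).smul_const (fderiv ℝ f x v))
  have hB : ∀ u : ℝ, HasDerivAt (fun u => M / 2 * ‖v‖ ^ 2 * u ^ 2) (M * ‖v‖ ^ 2 * u) u :=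
    fun u => ((hasDerivAt_pow 2 u).const_mul (M / 2 * ‖v‖ ^ 2)).congr_deriv (by norm_num; ring)
  have hbound := image_norm_le_of_norm_deriv_right_le_deriv_boundary (f := g)
    (B := fun u => M / 2 * ‖v‖ ^ 2 * u ^ 2) (B' := fun u => M * ‖v‖ ^ 2 * u)
    (fun u hu => (hg u hu).continuousAt.continuousWithinAt)
    (fun u hu => (hg u (Ico_subset_Icc_self hu)).hasDerivWithinAt) (by simp [g]) hB
    (fun u hu => by
      calc ‖fderiv ℝ f (x + u • v) v - fderiv ℝ f x v‖
          ≤ ‖fderiv ℝ f (x + u • v) - fderiv ℝ f x‖ * ‖v‖ :=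
            (fderiv ℝ f (x + u • v) - fderiv ℝ f x).le_opNorm v
        _ ≤ M * ‖u • v‖ * ‖v‖ := by
            gcongr
            simpa using hlip _ (hseg u (Ico_subset_Icc_self hu))
        _ = M * ‖v‖ ^ 2 * u := by
            rw [norm_smul, Real.norm_of_nonneg hu.1]; ring)
  simpa only [g, v, one_smul, add_sub_cancel, one_pow, mul_one] using
    hbound (right_mem_Icc.2 zero_le_one)

theorem segment_subset_thickening {S : Set E} {a b : E} (ha : a ∈ S) (hb : b ∈ S) {ε : ℝ}
    (hab : dist a b < 2 * ε) :
    segment ℝ a b ⊆ thickening ε S := by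
  intro z hz
  have := dist_add_dist_of_mem_segment hz
  rw [mem_thickening_iff]
  by_cases hza : dist z a < ε
  · exact ⟨a, ha, hza⟩
  · exact ⟨b, hb, by rw [dist_comm] at hza; linarith⟩

end NormedSpace

section InnerProductSpace

variable [NormedAddCommGroup E] [InnerProductSpace ℝ E] [CompleteSpace E]

theorem abs_inner_gradient_sub_le_of_eq {η : E → ℝ} {U : Set E} (hU : IsOpen U)
    (hη : ContDiffOn ℝ 2 η U) {a b : E} (hab : η a = η b) (hseg : segment ℝ a b ⊆ U) {M : ℝ}
    (hM : ∀ z ∈ segment ℝ a b, ‖fderiv ℝ (fderiv ℝ η) z‖ ≤ M) :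
    |⟪gradient η a, b - a⟫| ≤ M / 2 * ‖b - a‖ ^ 2 := by
  have := norm_image_sub_sub_fderiv_le hU hη hseg hM
  rwa [hab, sub_self, zero_sub, norm_neg, Real.norm_eq_abs,
    ← InnerProductSpace.toDual_symm_apply] at this

theorem two_mul_abs_inner_normalize_gradient_le {η : E → ℝ} {S : Set E} {ε : ℝ}
    (hη : ContDiffOn ℝ 2 η (thickening ε S)) {a b : E} (ha : a ∈ S) (hb : b ∈ S)
    (hab : η a = η b) (hdist : ‖b - a‖ < 2 * ε)
    (hM : ∀ z ∈ ball a (2 * ε) ∩ thickening ε S,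
      ε * ‖fderiv ℝ (fderiv ℝ η) z‖ ≤ ‖gradient η a‖) :
    2 * ε * |⟪‖gradient η a‖⁻¹ • gradient η a, b - a⟫| ≤ ‖b - a‖ ^ 2 := by
  have hε : 0 < ε := by linarith [norm_nonneg (b - a)]
  have hseg : segment ℝ a b ⊆ ball a (2 * ε) ∩ thickening ε S :=
    subset_inter ((convex_ball a _).segment_subset (mem_ball_self (by positivity))
      (by rwa [mem_ball, dist_eq_norm]))
      (segment_subset_thickening ha hb (by rwa [dist_eq_norm, norm_sub_rev]))
  have hflat := abs_inner_gradient_sub_le_of_eq isOpen_thickening hη hab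
    (hseg.trans inter_subset_right) (M := ‖gradient η a‖ / ε)
    (fun z hz => by rw [le_div_iff₀ hε, mul_comm]; exact hM z (hseg hz))
  rcases eq_or_ne (gradient η a) 0 with h0 | h0
  · simp [h0]
  have hg : 0 < ‖gradient η a‖ := norm_pos_iff.2 h0
  rw [real_inner_smul_left, abs_mul, abs_inv, abs_norm]
  calc 2 * ε * (‖gradient η a‖⁻¹ * |⟪gradient η a, b - a⟫|)
      ≤ 2 * ε * (‖gradient η a‖⁻¹ * (‖gradient η a‖ / ε / 2 * ‖b - a‖ ^ 2)) := by gcongr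
    _ = ‖b - a‖ ^ 2 := by field_simp

theorem exists_sub_eq_smul_gradient_of_isLocalMinOn {f : E → ℝ} {x₀ p : E}
    (hf : HasStrictFDerivAt f (fderiv ℝ f x₀) x₀) (hg : gradient f x₀ ≠ 0)
    (hmin : IsLocalMinOn (fun y => ‖y - p‖ ^ 2) {y | f y = f x₀} x₀) :
    ∃ c : ℝ, p - x₀ = c • gradient f x₀ := by
  obtain ⟨a, b, hab, hlin⟩ :=
    IsLocalExtrOn.exists_multipliers_of_hasStrictFDerivAt_1d (.inl hmin) hf
      ((hasStrictFDerivAt_norm_sq (x₀ - p)).comp x₀ ((hasStrictFDerivAt_id x₀).sub_const p))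
  set w := a • gradient f x₀ + (2 * b) • (x₀ - p)
  have hw : w = 0 := by
    have hfw : fderiv ℝ f x₀ w = ⟪gradient f x₀, w⟫ := InnerProductSpace.toDual_symm_apply.symm
    have := congr($hlin w)
    simp only [ContinuousLinearMap.comp_id, add_apply, smul_apply, smul_eq_mul, nsmul_eq_mul,
      Nat.cast_ofNat, zero_apply, innerSL_apply_apply, hfw] at this
    refine inner_self_eq_zero (𝕜 := ℝ) |>.1 ?_
    rw [inner_add_left, real_inner_smul_left, real_inner_smul_left]
    linear_combination this
  have hb : b ≠ 0 := by
    rintro rfl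
    simp only [mul_zero, zero_smul, add_zero, w, smul_eq_zero, hg, or_false] at hw
    exact hab (by simp [hw])
  refine ⟨a / (2 * b), ?_⟩
  rw [div_eq_inv_mul, mul_smul, eq_inv_smul_iff₀ (by simpa using hb)]
  linear_combination (norm := module) -hw

end InnerProductSpace

section Tube

variable [NormedAddCommGroup E] [InnerProductSpace ℝ E]

theorem injOn_add_smul_of_two_mul_abs_inner_le {S : Set E} {ν : E → E} {ε : ℝ}
    (hν : ∀ x ∈ S, ‖ν x‖ = 1)
    (hflat : ∀ a ∈ S, ∀ b ∈ S, ‖b - a‖ < 2 * ε → 2 * ε * |⟪ν a, b - a⟫| ≤ ‖b - a‖ ^ 2) :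
    InjOn (fun p : E × ℝ => p.1 + p.2 • ν p.1) (S ×ˢ Ioo (-ε) ε) := by
  rintro ⟨x, t⟩ ⟨hx, ht⟩ ⟨y, s⟩ ⟨hy, hs⟩ h
  simp only at h hx hy ht hs
  have ht' : |t| < ε := abs_lt.2 ht
  have hs' : |s| < ε := abs_lt.2 hs
  have hδ : y - x = t • ν x - s • ν y := by rw [sub_eq_sub_iff_add_eq_add, ← h, add_comm]
  have hδlt : ‖y - x‖ < 2 * ε := by
    calc ‖y - x‖ ≤ ‖t • ν x‖ + ‖s • ν y‖ := hδ ▸ norm_sub_le _ _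
      _ = |t| + |s| := by rw [norm_smul, norm_smul, hν x hx, hν y hy]; simp
      _ < 2 * ε := by linarith
  obtain rfl : x = y := by
    by_contra hne
    have hpos : 0 < ‖y - x‖ ^ 2 := by have := sub_ne_zero.2 (Ne.symm hne); positivity
    have hsq : ‖y - x‖ ^ 2 = t * ⟪ν x, y - x⟫ + s * ⟪ν y, x - y⟫ := by
      rw [← real_inner_self_eq_norm_sq]
      nth_rw 1 [hδ]
      rw [inner_sub_left, real_inner_smul_left, real_inner_smul_left, ← neg_sub y x,
        inner_neg_right]
      ring
    have hx' := hflat x hx y hy hδlt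
    have hy' := hflat y hy x hx (by rwa [norm_sub_rev])
    rw [norm_sub_rev] at hy'
    have h1 : t * ⟪ν x, y - x⟫ ≤ |t| * |⟪ν x, y - x⟫| := by rw [← abs_mul]; exact le_abs_self _
    have h2 : s * ⟪ν y, x - y⟫ ≤ |s| * |⟪ν y, x - y⟫| := by rw [← abs_mul]; exact le_abs_self _
    nlinarith [abs_nonneg t, abs_nonneg s]
  have hνx : ν x ≠ 0 := by simp [← norm_ne_zero_iff, hν x hx]
  simp only [add_right_inj] at h
  rw [smul_left_injective ℝ hνx h]

theorem image_add_smul_subset_thickening {S : Set E} {ν : E → E} {ε : ℝ}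
    (hν : ∀ x ∈ S, ‖ν x‖ = 1) :
    (fun p : E × ℝ => p.1 + p.2 • ν p.1) '' (S ×ˢ Ioo (-ε) ε) ⊆ thickening ε S := by
  rintro _ ⟨⟨x, t⟩, ⟨hx, ht⟩, rfl⟩
  refine mem_thickening_iff.2 ⟨x, hx, ?_⟩
  simpa [dist_eq_norm, norm_smul, hν x hx] using abs_lt.2 ht

theorem thickening_subset_image_add_smul_normalize_gradient [ProperSpace E] {η : E → ℝ}
    (hη : Continuous η) {c : ℝ} {S : Set E} (hS : S = {x | η x = c}) {ε : ℝ}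
    (hdiff : ∀ x ∈ S, HasStrictFDerivAt η (fderiv ℝ η x) x) (hgrad : ∀ x ∈ S, gradient η x ≠ 0) :
    thickening ε S ⊆
      (fun p : E × ℝ => p.1 + p.2 • (‖gradient η p.1‖⁻¹ • gradient η p.1)) ''
        (S ×ˢ Ioo (-ε) ε) := by
  intro y hy
  obtain ⟨s, hs, -⟩ := mem_thickening_iff.1 hy
  have hSc : IsClosed S := hS ▸ isClosed_eq hη continuous_const
  obtain ⟨x, hx, hxy⟩ := hSc.exists_infDist_eq_dist ⟨s, hs⟩ y
  have hlt : ‖y - x‖ < ε := by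
    rw [← dist_eq_norm, ← hxy]; exact (mem_thickening_iff_infDist_lt ⟨s, hs⟩).1 hy
  have hmin : IsLocalMinOn (fun z => ‖z - y‖ ^ 2) {z | η z = η x} x := by
    refine IsMinOn.localize fun z hz => ?_
    have hzS : z ∈ S := by subst hS; simpa [hx.out] using hz
    change ‖x - y‖ ^ 2 ≤ ‖z - y‖ ^ 2
    rw [← dist_eq_norm, ← dist_eq_norm, dist_comm x, dist_comm z, ← hxy]
    exact pow_le_pow_left₀ infDist_nonneg (infDist_le_dist_of_mem hzS) 2
  obtain ⟨k, hk⟩ := exists_sub_eq_smul_gradient_of_isLocalMinOn (hdiff x hx) (hgrad x hx) hmin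
  have hg : ‖gradient η x‖ ≠ 0 := norm_ne_zero_iff.2 (hgrad x hx)
  refine ⟨(x, k * ‖gradient η x‖), ⟨hx, abs_lt.1 ?_⟩, ?_⟩
  · simpa [hk, norm_smul, abs_mul] using hlt
  · simp only [smul_smul, mul_assoc, mul_inv_cancel₀ hg, mul_one, ← hk, add_sub_cancel]

end Tube

theorem stmt1_general (d : ℕ) (η : EuclideanSpace ℝ (Fin d) → ℝ)
    (hcont : Continuous η)
    (S : Set (EuclideanSpace ℝ (Fin d)))
    (hS : S = {x | η x = 1/2})
    (ε : ℝ) (hε : 0 < ε)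
    (hdiff : ContDiffOn ℝ 2 η (S + Metric.ball (0 : EuclideanSpace ℝ (Fin d)) ε))
    (hgrad : ∀ x₀ ∈ S, gradient η x₀ ≠ 0)
    (hεsmall : ∀ x₀ ∈ S,
      ∀ z ∈ Metric.ball x₀ (2 * ε) ∩ (S + Metric.ball (0 : EuclideanSpace ℝ (Fin d)) ε),
        ε * ‖fderiv ℝ (fun y => fderiv ℝ η y) z‖ ≤ ‖gradient η x₀‖) :
    Set.InjOn (fun p : EuclideanSpace ℝ (Fin d) × ℝ =>
        p.1 + p.2 • (‖gradient η p.1‖⁻¹ • gradient η p.1)) (S ×ˢ Set.Ioo (-ε) ε) ∧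
    (fun p : EuclideanSpace ℝ (Fin d) × ℝ =>
        p.1 + p.2 • (‖gradient η p.1‖⁻¹ • gradient η p.1)) '' (S ×ˢ Set.Ioo (-ε) ε) =
      S + Metric.ball (0 : EuclideanSpace ℝ (Fin d)) ε := by
  rw [add_ball_zero] at hdiff hεsmall ⊢
  have hν : ∀ x ∈ S, ‖‖gradient η x‖⁻¹ • gradient η x‖ = 1 :=
    fun x hx => norm_smul_inv_norm (hgrad x hx)
  have hlevel : ∀ x ∈ S, η x = 1 / 2 := fun x hx => by rwa [hS] at hx
  have hstrict : ∀ x ∈ S, HasStrictFDerivAt η (fderiv ℝ η x) x := fun x hx =>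
    (hdiff.contDiffAt (isOpen_thickening.mem_nhds (self_subset_thickening hε S hx))
      ).hasStrictFDerivAt (by norm_num)
  refine ⟨injOn_add_smul_of_two_mul_abs_inner_le hν fun a ha b hb hab => ?_,
    (image_add_smul_subset_thickening hν).antisymm
      (thickening_subset_image_add_smul_normalize_gradient hcont hS hstrict hgrad)⟩
  exact two_mul_abs_inner_normalize_gradient_le hdiff ha hb
    ((hlevel a ha).trans (hlevel b hb).symm) hab (hεsmall a ha)

theorem stmt1 (d : ℕ) (hd : 1 ≤ d) (η : EuclideanSpace ℝ (Fin d) → ℝ)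
    (hcont : Continuous η)
    (S : Set (EuclideanSpace ℝ (Fin d)))
    (hS : S = {x | η x = 1/2}) (hSne : S.Nonempty)
    (ε : ℝ) (hε : 0 < ε)
    (hdiff : ContDiffOn ℝ 2 η (S + Metric.ball (0 : EuclideanSpace ℝ (Fin d)) ε))
    (hgrad : ∀ x₀ ∈ S, gradient η x₀ ≠ 0)
    (hεsmall : ∀ x₀ ∈ S,
      ∀ z ∈ Metric.ball x₀ (2 * ε) ∩ (S + Metric.ball (0 : EuclideanSpace ℝ (Fin d)) ε),
        ε * ‖fderiv ℝ (fun y => fderiv ℝ η y) z‖ ≤ ‖gradient η x₀‖) :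
    Set.InjOn (fun p : EuclideanSpace ℝ (Fin d) × ℝ =>
        p.1 + p.2 • (‖gradient η p.1‖⁻¹ • gradient η p.1)) (S ×ˢ Set.Ioo (-ε) ε) ∧
    (fun p : EuclideanSpace ℝ (Fin d) × ℝ =>
        p.1 + p.2 • (‖gradient η p.1‖⁻¹ • gradient η p.1)) '' (S ×ˢ Set.Ioo (-ε) ε) =
      S + Metric.ball (0 : EuclideanSpace ℝ (Fin d)) ε :=
  stmt1_general d η hcont S hS ε hε hdiff hgrad hεsmall
end
end

section
/- For every c ∈ ℝ, the function u ↦ u·(Φ(−(u+c)) − 𝟙{u < 0}) is Lebesgue integrable on ℝ, and ∫_{−∞}^{∞} u·(Φ(−(u+c)) − 𝟙{u < 0}) du = (1 + c²)/2. -/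
/-!
With `ν` the law of `X + c`, `X` standard normal, `Φ(-(u + c)) = ν(-∞, -u]`, and
`u (𝟙{x ≤ -u} - 𝟙{u < 0}) = |u| 𝟙{u ∈ (0, -x]}` (interval taken between its endpoints in either
order). This is nonnegative with `u`-integral `x² / 2`, so Tonelli and Fubini turn the integral into
`E[(X + c)²] / 2 = (1 + c²) / 2`.
-/

open MeasureTheory

noncomputable section

/-- The standard normal distribution function. -/
noncomputable def stdNormalCDF (t : ℝ) : ℝ :=
  ∫ s in Set.Iic t, (Real.sqrt (2 * Real.pi))⁻¹ * Real.exp (-(s ^ 2) / 2)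

open ProbabilityTheory Set
open scoped Interval

lemma mul_ite_sub_ite_eq_indicator_uIoc (a u : ℝ) :
    u * ((if u ≤ a then 1 else 0) - if u < 0 then 1 else 0) = (Ι 0 a).indicator (|·|) u := by
  simp only [indicator, mem_uIoc]
  split_ifs <;> grind [abs_of_nonneg, abs_of_nonpos]

lemma integral_indicator_uIoc_abs (a : ℝ) : ∫ u, (Ι 0 a).indicator (|·|) u = a ^ 2 / 2 := by
  rw [integral_indicator measurableSet_uIoc]
  rcases le_total 0 a with ha | ha
  · rw [uIoc_of_le ha, ← intervalIntegral.integral_of_le ha,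
      intervalIntegral.integral_congr (f := fun u => |u|) (g := id) fun u hu => abs_of_nonneg ?_]
    · simp [integral_id]
    · exact (uIcc_of_le ha ▸ hu).1
  · rw [uIoc_of_ge ha, ← intervalIntegral.integral_of_le ha,
      intervalIntegral.integral_congr (f := fun u => |u|) (g := fun u => -u)
        fun u hu => abs_of_nonpos ?_, intervalIntegral.integral_neg]
    · simp [integral_id, neg_div]
    · exact (uIcc_of_le ha ▸ hu).2

section Fubini

variable (ν : Measure ℝ)

lemma measurable_indicator_uIoc_neg_abs :
    Measurable fun p : ℝ × ℝ => (Ι 0 (-p.2)).indicator (|·|) p.1 := by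
  simp_rw [← mul_ite_sub_ite_eq_indicator_uIoc]
  refine measurable_fst.mul (Measurable.sub ?_ ?_) <;>
    exact Measurable.ite (by measurability) measurable_const measurable_const

lemma integrable_prod_indicator_uIoc_neg_abs [SFinite ν] (h : Integrable (fun x => x ^ 2) ν) :
    Integrable (fun p : ℝ × ℝ => (Ι 0 (-p.2)).indicator (|·|) p.1) (volume.prod ν) := by
  refine (integrable_prod_iff' (measurable_indicator_uIoc_neg_abs.aestronglyMeasurable)).2
    ⟨ae_of_all _ fun x => ?_, ?_⟩
  · exact (continuous_abs.integrableOn_uIoc (μ := volume) (a := 0) (b := -x)).integrable_indicator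
      measurableSet_uIoc
  · have hnorm : ∀ x u : ℝ, ‖(Ι 0 (-x)).indicator (|·|) u‖ = (Ι 0 (-x)).indicator (|·|) u :=
      fun x u => Real.norm_of_nonneg (indicator_nonneg (fun _ _ => abs_nonneg _) u)
    simp_rw [hnorm, integral_indicator_uIoc_abs, neg_sq]
    exact h.div_const 2

lemma integral_indicator_uIoc_neg_abs_eq_mul_cdf [IsProbabilityMeasure ν] (u : ℝ) :
    ∫ x, (Ι 0 (-x)).indicator (|·|) u ∂ν = u * (cdf ν (-u) - if u < 0 then 1 else 0) := by
  calc ∫ x, (Ι 0 (-x)).indicator (|·|) u ∂ν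
      = ∫ x, u * ((Iic (-u)).indicator 1 x - if u < 0 then 1 else 0) ∂ν := by
        congr 1 with x
        simp only [← mul_ite_sub_ite_eq_indicator_uIoc, indicator_apply, mem_Iic, Pi.one_apply,
          le_neg (a := u)]
    _ = u * (cdf ν (-u) - if u < 0 then 1 else 0) := by
        rw [integral_const_mul, integral_sub ((integrable_const 1).indicator measurableSet_Iic)
          (integrable_const _), integral_indicator_one measurableSet_Iic, integral_const,
          cdf_eq_real]
        simp

theorem integrable_mul_cdf_neg_sub [IsProbabilityMeasure ν] (h : Integrable (fun x => x ^ 2) ν) :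
    Integrable fun u => u * (cdf ν (-u) - if u < 0 then 1 else 0) := by
  simp_rw [← integral_indicator_uIoc_neg_abs_eq_mul_cdf ν]
  exact (integrable_prod_indicator_uIoc_neg_abs ν h).integral_prod_left

theorem integral_mul_cdf_neg_sub [IsProbabilityMeasure ν] (h : Integrable (fun x => x ^ 2) ν) :
    ∫ u, u * (cdf ν (-u) - if u < 0 then 1 else 0) = (∫ x, x ^ 2 ∂ν) / 2 := by
  simp_rw [← integral_indicator_uIoc_neg_abs_eq_mul_cdf ν]
  rw [integral_integral_swap (integrable_prod_indicator_uIoc_neg_abs ν h)]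
  simp_rw [integral_indicator_uIoc_abs, neg_sq]
  exact integral_div 2 _

end Fubini

lemma stdNormalCDF_eq_cdf_gaussianReal (t : ℝ) : stdNormalCDF t = cdf (gaussianReal 0 1) t := by
  rw [cdf_eq_real, measureReal_def, gaussianReal_apply_eq_integral _ one_ne_zero,
    ENNReal.toReal_ofReal (setIntegral_nonneg measurableSet_Iic
      fun x _ => gaussianPDFReal_nonneg _ _ x)]
  simp [stdNormalCDF, gaussianPDFReal]

lemma stdNormalCDF_neg_add (u c : ℝ) : stdNormalCDF (-(u + c)) = cdf (gaussianReal c 1) (-u) := by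
  rw [stdNormalCDF_eq_cdf_gaussianReal, cdf_eq_real, cdf_eq_real, ← zero_add c,
    ← gaussianReal_map_add_const, map_measureReal_apply (by fun_prop) measurableSet_Iic]
  congr 1
  ext x
  simp only [mem_preimage, mem_Iic]
  constructor <;> intro h <;> linarith

lemma integral_sq_gaussianReal (μ : ℝ) (v : NNReal) : ∫ x, x ^ 2 ∂gaussianReal μ v = v + μ ^ 2 := by
  have h := variance_eq_sub (memLp_id_gaussianReal (μ := μ) (v := v) 2)
  simp only [variance_id_gaussianReal, Pi.pow_apply, id_eq, integral_id_gaussianReal] at h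
  linarith

theorem stmt4 (c : ℝ) :
    Integrable (fun u : ℝ => u * (stdNormalCDF (-(u + c)) - if u < 0 then 1 else 0)) ∧
    (∫ u : ℝ, u * (stdNormalCDF (-(u + c)) - if u < 0 then 1 else 0)) = (1 + c ^ 2) / 2 := by
  have hsq : Integrable (fun x => x ^ 2) (gaussianReal c 1) :=
    (memLp_id_gaussianReal 2).integrable_sq
  simp_rw [stdNormalCDF_neg_add]
  refine ⟨integrable_mul_cdf_neg_sub _ hsq, ?_⟩
  rw [integral_mul_cdf_neg_sub _ hsq, integral_sq_gaussianReal]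
  push_cast
  ring
end
end

section
/- Let d ≥ 1, ρ > 0, M₀ > 0, and β ∈ (0, ρ/(ρ+d)). Let f : ℝ^d → [0, ∞) be a measurable probability density (∫_{ℝ^d} f = 1) with ∫_{ℝ^d} ‖x‖^ρ f(x) dx ≤ M₀. Then the integral J := ∫_{ℝ^d} (1 + ‖x‖^ρ)^{−(1−β)/β} dx is finite, and for every δ > 0, ∫_{{x : f(x) ≤ δ}} f(x) dx ≤ δ^β · (1 + M₀)^{1−β} · J^β. -/
open MeasureTheory

noncomputable section

open scoped ENNReal

/-! Pointwise, `f = (f w)^(1-β) (f w^(-(1-β)/β))^β` for the weight `w = 1 + ‖x‖^ρ`, so Hölder's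
inequality with exponents `1/(1-β)` and `1/β` on `{f ≤ δ}` bounds `∫_{f ≤ δ} f` by
`(∫ f w)^(1-β) (δ ∫ w^(-(1-β)/β))^β`. The first factor is at most `1 + M₀` by the moment bound;
the second integral is finite because `ρ (1-β)/β > d`, and `w^(-(1-β)/β)` is comparable to
`(1 + ‖x‖)^(-ρ(1-β)/β)`. -/

theorem lt_one_and_lt_mul_one_sub_div_of_lt_div_add {ρ d β : ℝ} (hρ : 0 < ρ) (hd : 0 ≤ d)
    (hβ0 : 0 < β) (hβ : β < ρ / (ρ + d)) : β < 1 ∧ d < ρ * ((1 - β) / β) := by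
  have hρd : 0 < ρ + d := by positivity
  refine ⟨hβ.trans_le ((div_le_one hρd).mpr (by linarith)), ?_⟩
  rw [lt_div_iff₀ hρd] at hβ
  rw [mul_div_assoc', lt_div_iff₀ hβ0]
  nlinarith

theorem ENNReal.ofReal_rpow_mul_ofReal_mul_ofReal_rpow {a b c β : ℝ} (ha : 0 ≤ a) (hb : 0 ≤ b)
    (hc : 0 ≤ c) (hβ0 : 0 ≤ β) (hβ1 : β ≤ 1) :
    ENNReal.ofReal a ^ (1 - β) * (ENNReal.ofReal b * ENNReal.ofReal c) ^ β =
      ENNReal.ofReal (b ^ β * a ^ (1 - β) * c ^ β) := by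
  rw [← ENNReal.ofReal_mul hb, ENNReal.ofReal_rpow_of_nonneg ha (by linarith),
    ENNReal.ofReal_rpow_of_nonneg (by positivity) hβ0, ← ENNReal.ofReal_mul (by positivity),
    Real.mul_rpow hb hc]
  ring_nf

theorem one_add_rpow_le_two_rpow_mul {t ρ : ℝ} (ht : 0 ≤ t) (hρ : 0 ≤ ρ) :
    (1 + t) ^ ρ ≤ 2 ^ ρ * (1 + t ^ ρ) := by
  have htρ : 0 ≤ t ^ ρ := Real.rpow_nonneg ht ρ
  rcases le_total t 1 with h | h
  · have : (1 + t) ^ ρ ≤ 2 ^ ρ := Real.rpow_le_rpow (by linarith) (by linarith) hρ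
    nlinarith [Real.rpow_nonneg zero_le_two ρ]
  · have : (1 + t) ^ ρ ≤ 2 ^ ρ * t ^ ρ := by
      rw [← Real.mul_rpow zero_le_two ht]
      exact Real.rpow_le_rpow (by linarith) (by linarith) hρ
    nlinarith [Real.rpow_nonneg zero_le_two ρ]

theorem one_add_rpow_rpow_neg_le {t ρ s : ℝ} (ht : 0 ≤ t) (hρ : 0 ≤ ρ) (hs : 0 ≤ s) :
    (1 + t ^ ρ) ^ (-s) ≤ 2 ^ (ρ * s) * (1 + t) ^ (-(ρ * s)) := by
  have h2 : (0 : ℝ) < 2 ^ ρ := by positivity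
  calc (1 + t ^ ρ) ^ (-s) ≤ ((2 ^ ρ)⁻¹ * (1 + t) ^ ρ) ^ (-s) := by
        refine Real.rpow_le_rpow_of_nonpos (by positivity) ?_ (neg_nonpos.mpr hs)
        rw [inv_mul_le_iff₀ h2]
        exact one_add_rpow_le_two_rpow_mul ht hρ
    _ = 2 ^ (ρ * s) * (1 + t) ^ (-(ρ * s)) := by
        rw [Real.mul_rpow (by positivity) (by positivity), Real.inv_rpow h2.le,
          ← Real.rpow_neg h2.le, ← Real.rpow_mul zero_le_two, ← Real.rpow_mul (by positivity)]
        ring_nf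

theorem integrable_one_add_norm_rpow_rpow_neg {E : Type*} [NormedAddCommGroup E]
    [NormedSpace ℝ E] [FiniteDimensional ℝ E] [MeasurableSpace E] [BorelSpace E]
    {μ : Measure E} [μ.IsAddHaarMeasure] {ρ s : ℝ} (hρ : 0 < ρ) (hs : 0 ≤ s)
    (hdim : (Module.finrank ℝ E : ℝ) < ρ * s) :
    Integrable (fun x : E => (1 + ‖x‖ ^ ρ) ^ (-s)) μ := by
  refine ((integrable_one_add_norm hdim).const_mul (2 ^ (ρ * s))).mono'
    (Measurable.aestronglyMeasurable (by fun_prop))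
    (.of_forall fun x => ?_)
  rw [Real.norm_of_nonneg (by positivity)]
  exact one_add_rpow_rpow_neg_le (norm_nonneg x) hρ.le hs

theorem ENNReal.eq_mul_ofReal_rpow_mul_mul_ofReal_rpow (a : ℝ≥0∞) {r β : ℝ} (hr : 0 < r)
    (hβ0 : 0 < β) (hβ1 : β < 1) :
    a = (a * ENNReal.ofReal r) ^ (1 - β) * (a * ENNReal.ofReal (r ^ (-((1 - β) / β)))) ^ β := by
  rw [ENNReal.mul_rpow_of_nonneg _ _ (by linarith), ENNReal.mul_rpow_of_nonneg _ _ hβ0.le,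
    ENNReal.ofReal_rpow_of_nonneg hr.le (by linarith),
    ENNReal.ofReal_rpow_of_nonneg (by positivity) hβ0.le, ← Real.rpow_mul hr.le,
    neg_mul, div_mul_cancel₀ _ hβ0.ne', Real.rpow_neg hr.le]
  calc a = (a ^ (1 - β) * a ^ β) *
        (ENNReal.ofReal (r ^ (1 - β)) * ENNReal.ofReal (r ^ (1 - β))⁻¹) := by
        rw [← ENNReal.rpow_add_of_nonneg _ _ (by linarith) hβ0.le, sub_add_cancel,
          ENNReal.rpow_one, ← ENNReal.ofReal_mul (by positivity),
          mul_inv_cancel₀ (by positivity), ENNReal.ofReal_one, mul_one]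
    _ = _ := by ring

theorem lintegral_le_lintegral_mul_rpow_mul_lintegral_mul_rpow {α : Type*} [MeasurableSpace α]
    {μ : Measure α} {F : α → ℝ≥0∞} {R : α → ℝ} {β : ℝ} (hF : AEMeasurable F μ)
    (hR : AEMeasurable R μ) (hRpos : ∀ x, 0 < R x) (hβ0 : 0 < β) (hβ1 : β < 1) :
    ∫⁻ x, F x ∂μ ≤ (∫⁻ x, F x * ENNReal.ofReal (R x) ∂μ) ^ (1 - β) *
      (∫⁻ x, F x * ENNReal.ofReal (R x ^ (-((1 - β) / β))) ∂μ) ^ β := by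
  calc ∫⁻ x, F x ∂μ = ∫⁻ x, (F x * ENNReal.ofReal (R x)) ^ (1 - β) *
        (F x * ENNReal.ofReal (R x ^ (-((1 - β) / β)))) ^ β ∂μ :=
        lintegral_congr fun x =>
          ENNReal.eq_mul_ofReal_rpow_mul_mul_ofReal_rpow _ (hRpos x) hβ0 hβ1
    _ ≤ _ := ENNReal.lintegral_mul_norm_pow_le (hF.mul hR.ennreal_ofReal)
        (hF.mul (hR.pow_const _).ennreal_ofReal) (by linarith) hβ0.le (by ring)

theorem setLIntegral_setOf_le_le_rpow_mul_rpow {α : Type*} [MeasurableSpace α]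
    {μ : Measure α} {F : α → ℝ≥0∞} {R : α → ℝ} {β : ℝ} (hF : Measurable F)
    (hR : Measurable R) (hRpos : ∀ x, 0 < R x) (hβ0 : 0 < β) (hβ1 : β < 1) (δ : ℝ≥0∞) :
    ∫⁻ x in {x | F x ≤ δ}, F x ∂μ ≤ (∫⁻ x, F x * ENNReal.ofReal (R x) ∂μ) ^ (1 - β) *
      (δ * ∫⁻ x, ENNReal.ofReal (R x ^ (-((1 - β) / β))) ∂μ) ^ β := by
  set A := {x | F x ≤ δ}
  have hW : Measurable fun x => ENNReal.ofReal (R x ^ (-((1 - β) / β))) := by fun_prop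
  refine (lintegral_le_lintegral_mul_rpow_mul_lintegral_mul_rpow hF.aemeasurable
    hR.aemeasurable hRpos hβ0 hβ1).trans (mul_le_mul' ?_ ?_)
  · exact ENNReal.rpow_le_rpow (setLIntegral_le_lintegral A _) (by linarith)
  · refine ENNReal.rpow_le_rpow ?_ hβ0.le
    calc ∫⁻ x in A, F x * ENNReal.ofReal (R x ^ (-((1 - β) / β))) ∂μ
        ≤ ∫⁻ x in A, δ * ENNReal.ofReal (R x ^ (-((1 - β) / β))) ∂μ :=
          setLIntegral_mono (hW.const_mul δ) fun x hx => mul_le_mul_left hx _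
      _ ≤ δ * ∫⁻ x, ENNReal.ofReal (R x ^ (-((1 - β) / β))) ∂μ := by
          rw [lintegral_const_mul _ hW]
          exact mul_le_mul_right (setLIntegral_le_lintegral A _) _

theorem lintegral_ofReal_mul_one_add_le {α : Type*} [MeasurableSpace α] {μ : Measure α}
    {f g : α → ℝ} (hf : Measurable f) (hf0 : ∀ x, 0 ≤ f x) (hg0 : ∀ x, 0 ≤ g x) {M : ℝ}
    (hM : 0 ≤ M) (hone : ∫⁻ x, ENNReal.ofReal (f x) ∂μ = 1)
    (hmom : ∫⁻ x, ENNReal.ofReal (g x * f x) ∂μ ≤ ENNReal.ofReal M) :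
    ∫⁻ x, ENNReal.ofReal (f x) * ENNReal.ofReal (1 + g x) ∂μ ≤ ENNReal.ofReal (1 + M) := by
  calc ∫⁻ x, ENNReal.ofReal (f x) * ENNReal.ofReal (1 + g x) ∂μ
      = ∫⁻ x, ENNReal.ofReal (f x) + ENNReal.ofReal (g x * f x) ∂μ := by
        refine lintegral_congr fun x => ?_
        rw [← ENNReal.ofReal_mul (hf0 x), ← ENNReal.ofReal_add (hf0 x)
          (mul_nonneg (hg0 x) (hf0 x)), mul_one_add, mul_comm]
    _ = 1 + ∫⁻ x, ENNReal.ofReal (g x * f x) ∂μ := by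
        rw [lintegral_add_left hf.ennreal_ofReal, hone]
    _ ≤ ENNReal.ofReal (1 + M) := by
        rw [ENNReal.ofReal_add zero_le_one hM, ENNReal.ofReal_one]
        gcongr

theorem stmt7_general (d : ℕ) (ρ M₀ β : ℝ) (hρ : 0 < ρ) (hM : 0 < M₀)
    (hβ : β ∈ Set.Ioo 0 (ρ / (ρ + (d : ℝ))))
    (f : EuclideanSpace ℝ (Fin d) → ℝ) (hmeas : Measurable f) (hpos : ∀ x, 0 ≤ f x)
    (hone : ∫⁻ x, ENNReal.ofReal (f x) = 1)
    (hmom : ∫⁻ x, ENNReal.ofReal (‖x‖ ^ ρ * f x) ≤ ENNReal.ofReal M₀) :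
    Integrable (fun x : EuclideanSpace ℝ (Fin d) => (1 + ‖x‖ ^ ρ) ^ (-((1 - β) / β))) ∧
    ∀ δ : ℝ, 0 < δ →
      (∫ x in {x | f x ≤ δ}, f x) ≤
        δ ^ β * (1 + M₀) ^ (1 - β) *
          (∫ x : EuclideanSpace ℝ (Fin d), (1 + ‖x‖ ^ ρ) ^ (-((1 - β) / β))) ^ β := by
  obtain ⟨hβ0, hβρ⟩ := hβ
  obtain ⟨hβ1, hdim⟩ := lt_one_and_lt_mul_one_sub_div_of_lt_div_add hρ d.cast_nonneg hβ0 hβρ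
  have hint := integrable_one_add_norm_rpow_rpow_neg (μ := volume) (s := (1 - β) / β) hρ
    (by positivity) (by rwa [finrank_euclideanSpace_fin])
  refine ⟨hint, fun δ hδ => ?_⟩
  set J := ∫ x : EuclideanSpace ℝ (Fin d), (1 + ‖x‖ ^ ρ) ^ (-((1 - β) / β))
  have hJ : ∫⁻ x : EuclideanSpace ℝ (Fin d), ENNReal.ofReal ((1 + ‖x‖ ^ ρ) ^ (-((1 - β) / β)))
      = ENNReal.ofReal J :=
    (ofReal_integral_eq_lintegral_ofReal hint (.of_forall fun x => by positivity)).symm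
  have hlevel : {x | ENNReal.ofReal (f x) ≤ ENNReal.ofReal δ} = {x | f x ≤ δ} := by
    ext x; exact ENNReal.ofReal_le_ofReal_iff hδ.le
  have hmain := setLIntegral_setOf_le_le_rpow_mul_rpow (μ := volume) hmeas.ennreal_ofReal
    (R := fun x => 1 + ‖x‖ ^ ρ) (by fun_prop) (fun x => by positivity) hβ0 hβ1 (ENNReal.ofReal δ)
  rw [hlevel, hJ] at hmain
  have hmoment :=
    lintegral_ofReal_mul_one_add_le hmeas hpos (fun x => by positivity) hM.le hone hmom
  rw [integral_eq_lintegral_of_nonneg_ae (.of_forall hpos) hmeas.aestronglyMeasurable.restrict]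
  refine ENNReal.toReal_le_of_le_ofReal (by positivity) (hmain.trans ?_)
  rw [← ENNReal.ofReal_rpow_mul_ofReal_mul_ofReal_rpow (by positivity) hδ.le (by positivity)
    hβ0.le hβ1.le]
  exact mul_le_mul_left (ENNReal.rpow_le_rpow hmoment (by linarith)) _

theorem stmt7 (d : ℕ) (hd : 1 ≤ d) (ρ M₀ β : ℝ) (hρ : 0 < ρ) (hM : 0 < M₀)
    (hβ : β ∈ Set.Ioo 0 (ρ / (ρ + (d : ℝ))))
    (f : EuclideanSpace ℝ (Fin d) → ℝ) (hmeas : Measurable f) (hpos : ∀ x, 0 ≤ f x)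
    (hone : ∫⁻ x, ENNReal.ofReal (f x) = 1)
    (hmom : ∫⁻ x, ENNReal.ofReal (‖x‖ ^ ρ * f x) ≤ ENNReal.ofReal M₀) :
    Integrable (fun x : EuclideanSpace ℝ (Fin d) => (1 + ‖x‖ ^ ρ) ^ (-((1 - β) / β))) ∧
    ∀ δ : ℝ, 0 < δ →
      (∫ x in {x | f x ≤ δ}, f x) ≤
        δ ^ β * (1 + M₀) ^ (1 - β) *
          (∫ x : EuclideanSpace ℝ (Fin d), (1 + ‖x‖ ^ ρ) ^ (-((1 - β) / β))) ^ β :=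
  stmt7_general d ρ M₀ β hρ hM hβ f hmeas hpos hone hmom
end
end

section
/- Let d ≥ 1, γ ∈ (1, 2], and λ > 0. Let K : ℝ^d → ℝ be Lebesgue integrable with ∫_{ℝ^d} K(z) dz = 1, ∫_{ℝ^d} z·K(z) dz = 0 (the vector-valued integral vanishes), and ∫_{ℝ^d} ‖z‖^γ |K(z)| dz < ∞. Let f : ℝ^d → ℝ be bounded and differentiable everywhere with ‖∇f(y) − ∇f(x)‖ ≤ λ‖y − x‖^{γ−1} for all x, y ∈ ℝ^d. Then for every h > 0 and every x ∈ ℝ^d, | ∫_{ℝ^d} h^{−d} K((x − y)/h) f(y) dy − f(x) | ≤ λ · h^γ · ∫_{ℝ^d} ‖z‖^γ |K(z)| dz. -/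
open MeasureTheory

noncomputable section
set_option maxHeartbeats 1000000 in

theorem stmt17 (d : ℕ) (hd : 1 ≤ d) (γ lam : ℝ) (hγ : 1 < γ) (hγ' : γ ≤ 2) (hlam : 0 < lam)
    (K : EuclideanSpace ℝ (Fin d) → ℝ) (hK : Integrable K)
    (hK1 : (∫ z, K z) = 1)
    (hK0 : (∫ z : EuclideanSpace ℝ (Fin d), K z • z) = 0)
    (hKmom : Integrable (fun z : EuclideanSpace ℝ (Fin d) => ‖z‖ ^ γ * |K z|))
    (f : EuclideanSpace ℝ (Fin d) → ℝ) (C : ℝ) (hfb : ∀ x, |f x| ≤ C)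
    (hfd : Differentiable ℝ f)
    (hgrad : ∀ x y : EuclideanSpace ℝ (Fin d),
      ‖gradient f y - gradient f x‖ ≤ lam * ‖y - x‖ ^ (γ - 1))
    (h : ℝ) (hh : 0 < h) (x : EuclideanSpace ℝ (Fin d)) :
    |(∫ y : EuclideanSpace ℝ (Fin d), (h ^ d)⁻¹ * K (h⁻¹ • (x - y)) * f y) - f x|
      ≤ lam * h ^ γ * ∫ z : EuclideanSpace ℝ (Fin d), ‖z‖ ^ γ * |K z| := by
  set φ : EuclideanSpace ℝ (Fin d) →L[ℝ] ℝ := fderiv ℝ f x with hφ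
  -- gradient vs fderiv
  have hgradφ : ∀ z : EuclideanSpace ℝ (Fin d), fderiv ℝ f z = (InnerProductSpace.toDual ℝ (EuclideanSpace ℝ (Fin d))) (gradient f z) := by
    intro z
    simp [gradient, LinearIsometryEquiv.apply_symm_apply]
  have hfderiv_bound : ∀ a b : EuclideanSpace ℝ (Fin d), ‖fderiv ℝ f b - fderiv ℝ f a‖ ≤ lam * ‖b - a‖ ^ (γ - 1) := by
    intro a b
    rw [hgradφ a, hgradφ b, ← map_sub]
    rw [LinearIsometryEquiv.norm_map]
    exact hgrad a b
  -- Taylor estimate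
  have taylor : ∀ y : EuclideanSpace ℝ (Fin d), |f y - f x - φ (y - x)| ≤ lam * ‖y - x‖ ^ (γ - 1) * ‖y - x‖ := by
    intro y
    have hseg : Convex ℝ (segment ℝ x y) := convex_segment x y
    have := hseg.norm_image_sub_le_of_norm_fderiv_le'
      (f := f) (φ := φ) (C := lam * ‖y - x‖ ^ (γ - 1))
      (fun z _ => hfd z)
      (fun z hz => by
        have h1 : ‖z - x‖ ≤ ‖y - x‖ := by
          rw [segment_eq_image'] at hz
          obtain ⟨t, ht, rfl⟩ := hz
          rw [add_sub_cancel_left, norm_smul, Real.norm_eq_abs,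
            abs_of_nonneg ht.1]
          calc t * ‖y - x‖ ≤ 1 * ‖y - x‖ := by
                exact mul_le_mul_of_nonneg_right ht.2 (norm_nonneg _)
            _ = ‖y - x‖ := one_mul _
        calc ‖fderiv ℝ f z - φ‖ ≤ lam * ‖z - x‖ ^ (γ - 1) := hfderiv_bound x z
          _ ≤ lam * ‖y - x‖ ^ (γ - 1) := by
              exact mul_le_mul_of_nonneg_left
                (Real.rpow_le_rpow (norm_nonneg _) h1 (by linarith)) hlam.le)
      (left_mem_segment ℝ x y) (right_mem_segment ℝ x y)
    simpa [Real.norm_eq_abs] using this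
  -- remainder
  set r : EuclideanSpace ℝ (Fin d) → ℝ := fun z => f (x - h • z) - f x + h * φ z with hr
  have hrb : ∀ z : EuclideanSpace ℝ (Fin d), |r z| ≤ lam * h ^ γ * ‖z‖ ^ γ := by
    intro z
    have hy : (x - h • z) - x = (-h) • z := by
      rw [neg_smul]; abel
    have := taylor (x - h • z)
    rw [hy] at this
    have hφz : φ ((-h) • z) = -h * φ z := by
      rw [φ.map_smul]; simp [smul_eq_mul]
    rw [hφz] at this
    have hnorm : ‖(-h : ℝ) • z‖ = h * ‖z‖ := by
      rw [norm_smul, Real.norm_eq_abs, abs_neg, abs_of_pos hh]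
    rw [hnorm] at this
    have e1 : f (x - h • z) - f x - (-h * φ z) = r z := by rw [hr]; ring_nf
    rw [e1] at this
    refine this.trans (le_of_eq ?_)
    rcases eq_or_lt_of_le (norm_nonneg z) with hz0 | hz0
    · rw [← hz0]
      simp [Real.zero_rpow (by linarith : γ ≠ 0),
        Real.zero_rpow (by linarith : γ - 1 ≠ 0)]
    · have hpos : 0 < h * ‖z‖ := by positivity
      have e2 : (h * ‖z‖) ^ γ = (h * ‖z‖) ^ (γ - 1) * (h * ‖z‖) := by
        rw [show γ = (γ - 1) + 1 by ring, Real.rpow_add hpos, Real.rpow_one]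
        ring_nf
      rw [mul_assoc, ← e2, Real.mul_rpow hh.le (norm_nonneg z), mul_assoc]
  -- integrability facts
  have hfc : Continuous f := hfd.continuous
  have hcont2 : Continuous (fun z : EuclideanSpace ℝ (Fin d) => f (x - h • z)) :=
    hfc.comp (continuous_const.sub (continuous_id.const_smul h))
  have hi1 : Integrable (fun z : EuclideanSpace ℝ (Fin d) => K z * f (x - h • z)) := by
    have := hK.bdd_mul (f := fun z : EuclideanSpace ℝ (Fin d) => f (x - h • z)) (c := C)
      hcont2.aestronglyMeasurable
      (Filter.Eventually.of_forall fun z => by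
        simpa [Real.norm_eq_abs] using hfb (x - h • z))
    simpa [mul_comm] using this
  have hsm : Integrable (fun z : EuclideanSpace ℝ (Fin d) => K z • z) := by
    refine (hK.abs.add hKmom).mono
      ((hK.aestronglyMeasurable.smul aestronglyMeasurable_id)) ?_
    filter_upwards with z
    rw [norm_smul, Real.norm_eq_abs]
    have hmom0 : (0:ℝ) ≤ ‖z‖ ^ γ * |K z| := by positivity
    have hg : ‖|K z| + ‖z‖ ^ γ * |K z|‖ = |K z| + ‖z‖ ^ γ * |K z| := by
      rw [Real.norm_eq_abs, abs_of_nonneg (by positivity)]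
    simp only [Pi.add_apply]
    rw [hg]
    rcases le_or_gt ‖z‖ 1 with hz | hz
    · calc |K z| * ‖z‖ ≤ |K z| * 1 :=
            mul_le_mul_of_nonneg_left hz (abs_nonneg _)
        _ = |K z| := mul_one _
        _ ≤ |K z| + ‖z‖ ^ γ * |K z| := le_add_of_nonneg_right hmom0
    · have h1 : ‖z‖ ≤ ‖z‖ ^ γ := by
        calc ‖z‖ = ‖z‖ ^ (1:ℝ) := (Real.rpow_one _).symm
          _ ≤ ‖z‖ ^ γ := Real.rpow_le_rpow_of_exponent_le hz.le hγ.le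
      calc |K z| * ‖z‖ ≤ |K z| * ‖z‖ ^ γ :=
            mul_le_mul_of_nonneg_left h1 (abs_nonneg _)
        _ = ‖z‖ ^ γ * |K z| := mul_comm _ _
        _ ≤ |K z| + ‖z‖ ^ γ * |K z| := le_add_of_nonneg_left (abs_nonneg _)
  have hφsmul : ∀ z : EuclideanSpace ℝ (Fin d), φ (K z • z) = K z * φ z := by
    intro z; rw [φ.map_smul]; rfl
  have hiφ : Integrable (fun z : EuclideanSpace ℝ (Fin d) => K z * φ z) := by
    have := φ.integrable_comp hsm
    simpa only [hφsmul] using this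
  have hiφ0 : (∫ z : EuclideanSpace ℝ (Fin d), K z * φ z) = 0 := by
    have h2 := φ.integral_comp_comm hsm
    simp only [hφsmul] at h2
    rw [h2, hK0, map_zero]
  have hir : Integrable (fun z : EuclideanSpace ℝ (Fin d) => K z * r z) := by
    refine (hKmom.const_mul (lam * h ^ γ)).mono ?_ ?_
    · exact hK.aestronglyMeasurable.mul
        ((hcont2.sub continuous_const).add (continuous_const.mul φ.continuous)).aestronglyMeasurable
    · filter_upwards with z
      rw [Real.norm_eq_abs, Real.norm_eq_abs, abs_mul]
      calc |K z| * |r z| ≤ |K z| * (lam * h ^ γ * ‖z‖ ^ γ) :=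
            mul_le_mul_of_nonneg_left (hrb z) (abs_nonneg _)
        _ = lam * h ^ γ * (‖z‖ ^ γ * |K z|) := by ring
        _ ≤ |lam * h ^ γ * (‖z‖ ^ γ * |K z|)| := le_abs_self _
  -- change of variables
  have cov : (∫ y : EuclideanSpace ℝ (Fin d), (h ^ d)⁻¹ * K (h⁻¹ • (x - y)) * f y)
      = ∫ z : EuclideanSpace ℝ (Fin d), K z * f (x - h • z) := by
    have step1 : (∫ y : EuclideanSpace ℝ (Fin d), (h ^ d)⁻¹ * K (h⁻¹ • (x - y)) * f y)
        = ∫ y : EuclideanSpace ℝ (Fin d), (h ^ d)⁻¹ * K (h⁻¹ • y) * f (x - y) := by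
      rw [← integral_sub_left_eq_self (fun y : EuclideanSpace ℝ (Fin d) => (h ^ d)⁻¹ * K (h⁻¹ • y) * f (x - y)) volume x]
      congr 1
      ext y
      simp [sub_sub_cancel]
    rw [step1]
    have step2 := MeasureTheory.Measure.integral_comp_smul_of_nonneg (volume : Measure (EuclideanSpace ℝ (Fin d)))
      (fun y : EuclideanSpace ℝ (Fin d) => (h ^ d)⁻¹ * K (h⁻¹ • y) * f (x - y)) h (hR := hh.le)
    rw [finrank_euclideanSpace_fin] at step2
    have hhd : (h : ℝ) ^ d ≠ 0 := pow_ne_zero d hh.ne'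
    have e3 : ∀ z : EuclideanSpace ℝ (Fin d), (h ^ d)⁻¹ * K (h⁻¹ • h • z) * f (x - h • z)
        = (h ^ d)⁻¹ * (K z * f (x - h • z)) := by
      intro z
      rw [inv_smul_smul₀ hh.ne', mul_assoc]
    calc (∫ y : EuclideanSpace ℝ (Fin d), (h ^ d)⁻¹ * K (h⁻¹ • y) * f (x - y))
        = (h ^ d) • ((h ^ d)⁻¹ • ∫ y : EuclideanSpace ℝ (Fin d), (h ^ d)⁻¹ * K (h⁻¹ • y) * f (x - y)) := by
          rw [smul_smul, mul_inv_cancel₀ hhd, one_smul]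
      _ = (h ^ d) • ∫ z : EuclideanSpace ℝ (Fin d), (h ^ d)⁻¹ * K (h⁻¹ • h • z) * f (x - h • z) := by rw [step2]
      _ = (h ^ d) • ∫ z : EuclideanSpace ℝ (Fin d), (h ^ d)⁻¹ * (K z * f (x - h • z)) := by
          congr 1; exact integral_congr_ae (Filter.Eventually.of_forall e3)
      _ = (h ^ d) • ((h ^ d)⁻¹ * ∫ z : EuclideanSpace ℝ (Fin d), K z * f (x - h • z)) := by
          rw [integral_const_mul]
      _ = ∫ z : EuclideanSpace ℝ (Fin d), K z * f (x - h • z) := by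
          rw [smul_eq_mul, ← mul_assoc, mul_inv_cancel₀ hhd, one_mul]
  rw [cov]
  -- decompose
  have decomp : (∫ z : EuclideanSpace ℝ (Fin d), K z * f (x - h • z))
      = (∫ z : EuclideanSpace ℝ (Fin d), K z * r z) + f x := by
    have e : ∀ z : EuclideanSpace ℝ (Fin d), K z * f (x - h • z)
        = K z * r z + K z * f x + (-h) * (K z * φ z) := by
      intro z; rw [hr]; ring
    calc (∫ z : EuclideanSpace ℝ (Fin d), K z * f (x - h • z))
        = ∫ z : EuclideanSpace ℝ (Fin d), (K z * r z + K z * f x + (-h) * (K z * φ z)) := by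
          exact integral_congr_ae (Filter.Eventually.of_forall e)
      _ = (∫ z : EuclideanSpace ℝ (Fin d), K z * r z) + (∫ z : EuclideanSpace ℝ (Fin d), K z * f x)
            + ∫ z : EuclideanSpace ℝ (Fin d), (-h) * (K z * φ z) := by
          rw [integral_add (f := fun z : EuclideanSpace ℝ (Fin d) => K z * r z + K z * f x)
              (g := fun z : EuclideanSpace ℝ (Fin d) => (-h) * (K z * φ z))
              (hir.add (hK.mul_const (f x))) (hiφ.const_mul (-h)),
            integral_add hir (hK.mul_const (f x))]
      _ = (∫ z : EuclideanSpace ℝ (Fin d), K z * r z) + f x := by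
          rw [integral_const_mul, hiφ0, integral_mul_const, hK1, one_mul, mul_zero, add_zero]
  rw [decomp, add_sub_cancel_right]
  calc |∫ z : EuclideanSpace ℝ (Fin d), K z * r z| ≤ ∫ z : EuclideanSpace ℝ (Fin d), |K z * r z| := by
        have := norm_integral_le_integral_norm (μ := volume)
          (fun z : EuclideanSpace ℝ (Fin d) => K z * r z)
        simpa only [Real.norm_eq_abs] using this
    _ ≤ ∫ z : EuclideanSpace ℝ (Fin d), lam * h ^ γ * (‖z‖ ^ γ * |K z|) := by
        refine integral_mono hir.abs (hKmom.const_mul _) fun z => ?_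
        show |K z * r z| ≤ lam * h ^ γ * (‖z‖ ^ γ * |K z|)
        rw [abs_mul]
        calc |K z| * |r z| ≤ |K z| * (lam * h ^ γ * ‖z‖ ^ γ) :=
              mul_le_mul_of_nonneg_left (hrb z) (abs_nonneg _)
          _ = lam * h ^ γ * (‖z‖ ^ γ * |K z|) := by ring
    _ = lam * h ^ γ * ∫ z : EuclideanSpace ℝ (Fin d), ‖z‖ ^ γ * |K z| := integral_const_mul _ _
end
end

section
/- Let d ≥ 1, γ ∈ (0, 1], and λ > 0. Let K : ℝ^d → ℝ be Lebesgue integrable with ∫_{ℝ^d} K(z) dz = 1 and ∫_{ℝ^d} ‖z‖^γ |K(z)| dz < ∞. Let f : ℝ^d → ℝ be bounded and satisfy |f(y) − f(x)| ≤ λ‖y − x‖^γ for all x, y ∈ ℝ^d. Then for every h > 0 and every x ∈ ℝ^d, | ∫_{ℝ^d} h^{−d} K((x − y)/h) f(y) dy − f(x) | ≤ λ · h^γ · ∫_{ℝ^d} ‖z‖^γ |K(z)| dz. -/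
/-!
Substituting `y = x - h • z` turns the expected kernel density estimator into
`∫ K z * f (x - h • z) dz`, and `∫ K = 1` turns `f x` into `∫ K z * f x dz`. The difference is the
integral of `K z * (f (x - h • z) - f x)`, which the Hölder condition bounds pointwise by
`lam * h ^ γ * ‖z‖ ^ γ * |K z|`.
-/

open MeasureTheory Module

theorem continuous_of_abs_sub_le_mul_rpow {X : Type*} [PseudoMetricSpace X] {f : X → ℝ}
    {lam γ : ℝ} (hγ : 0 < γ) (hf : ∀ x y, |f y - f x| ≤ lam * dist y x ^ γ) : Continuous f := by
  refine continuous_iff_continuousAt.2 fun a ↦ tendsto_iff_dist_tendsto_zero.2 ?_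
  have hbound : Filter.Tendsto (fun y ↦ lam * dist y a ^ γ) (nhds a) (nhds 0) := by
    have hdist : Filter.Tendsto (fun y ↦ dist y a) (nhds a) (nhds 0) :=
      tendsto_iff_dist_tendsto_zero.1 Filter.tendsto_id
    simpa [Real.zero_rpow hγ.ne'] using
      ((Real.continuousAt_rpow_const 0 γ (Or.inr hγ.le)).tendsto.comp hdist).const_mul lam
  exact squeeze_zero (fun _ ↦ dist_nonneg) (fun y ↦ (Real.dist_eq _ _).trans_le (hf a y)) hbound

theorem abs_integral_kernel_mul_comp_sub_le {E : Type*} [NormedAddCommGroup E] [NormedSpace ℝ E]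
    [MeasurableSpace E] [OpensMeasurableSpace E] {μ : Measure E} {K f : E → ℝ} {lam γ h : ℝ}
    (hγ : 0 < γ) (hh : 0 ≤ h) (hK1 : ∫ z, K z ∂μ = 1)
    (hKmom : Integrable (fun z ↦ ‖z‖ ^ γ * |K z|) μ)
    (hf : ∀ x y, |f y - f x| ≤ lam * ‖y - x‖ ^ γ) (x : E) :
    |∫ z, K z * f (x - h • z) ∂μ - f x| ≤ lam * h ^ γ * ∫ z, ‖z‖ ^ γ * |K z| ∂μ := by
  have hK : Integrable K μ := .of_integral_ne_zero (by simp [hK1])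
  have hfc : Continuous f :=
    continuous_of_abs_sub_le_mul_rpow hγ fun x y ↦ by simpa [dist_eq_norm] using hf x y
  have hpoint : ∀ z, ‖K z * (f (x - h • z) - f x)‖ ≤ lam * h ^ γ * (‖z‖ ^ γ * |K z|) := by
    intro z
    have hfz : |f (x - h • z) - f x| ≤ lam * (h ^ γ * ‖z‖ ^ γ) := by
      simpa [norm_smul, abs_of_nonneg hh, Real.mul_rpow hh (norm_nonneg z)] using hf x (x - h • z)
    calc ‖K z * (f (x - h • z) - f x)‖ = |K z| * |f (x - h • z) - f x| := by
          rw [Real.norm_eq_abs, abs_mul]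
      _ ≤ |K z| * (lam * (h ^ γ * ‖z‖ ^ γ)) := by gcongr
      _ = lam * h ^ γ * (‖z‖ ^ γ * |K z|) := by ring
  have hdiff : Integrable (fun z ↦ K z * (f (x - h • z) - f x)) μ :=
    (hKmom.const_mul _).mono' (hK.aestronglyMeasurable.mul (by fun_prop : Continuous
      fun z ↦ f (x - h • z) - f x).aestronglyMeasurable) (.of_forall hpoint)
  have hsplit : ∫ z, K z * f (x - h • z) ∂μ - f x = ∫ z, K z * (f (x - h • z) - f x) ∂μ := by
    rw [show (fun z ↦ K z * f (x - h • z)) = fun z ↦ K z * (f (x - h • z) - f x) + K z * f x by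
      ext; ring, integral_add hdiff (hK.mul_const _), integral_mul_const, hK1, one_mul,
      add_sub_cancel_right]
  calc |∫ z, K z * f (x - h • z) ∂μ - f x|
      ≤ ∫ z, lam * h ^ γ * (‖z‖ ^ γ * |K z|) ∂μ := by
        rw [hsplit, ← Real.norm_eq_abs]
        exact norm_integral_le_of_norm_le (hKmom.const_mul _) (.of_forall hpoint)
    _ = lam * h ^ γ * ∫ z, ‖z‖ ^ γ * |K z| ∂μ := integral_const_mul _ _

theorem integral_rescaled_kernel_mul {E : Type*} [NormedAddCommGroup E] [NormedSpace ℝ E]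
    [MeasurableSpace E] [BorelSpace E] [FiniteDimensional ℝ E] (μ : Measure E)
    [μ.IsAddHaarMeasure] (K f : E → ℝ) (x : E) {h : ℝ} (hh : 0 < h) :
    ∫ y, (h ^ finrank ℝ E)⁻¹ * K (h⁻¹ • (x - y)) * f y ∂μ = ∫ z, K z * f (x - h • z) ∂μ := by
  have hscale := Measure.integral_comp_smul_of_nonneg μ
    (fun y ↦ (h ^ finrank ℝ E)⁻¹ * K (h⁻¹ • y) * f (x - y)) h (hR := hh.le)
  simp only [smul_smul, inv_mul_cancel₀ hh.ne', one_smul, mul_assoc, integral_const_mul,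
    smul_eq_mul] at hscale
  rw [← integral_sub_left_eq_self _ μ x]
  simp only [sub_sub_cancel, mul_assoc]
  rw [integral_const_mul]
  exact (mul_left_cancel₀ (by positivity) hscale).symm

theorem stmt18_general (d : ℕ) (γ lam : ℝ) (hγ : 0 < γ)
    (K : EuclideanSpace ℝ (Fin d) → ℝ)
    (hK1 : (∫ z, K z) = 1)
    (hKmom : Integrable (fun z : EuclideanSpace ℝ (Fin d) => ‖z‖ ^ γ * |K z|))
    (f : EuclideanSpace ℝ (Fin d) → ℝ)
    (hfH : ∀ x y : EuclideanSpace ℝ (Fin d), |f y - f x| ≤ lam * ‖y - x‖ ^ γ)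
    (h : ℝ) (hh : 0 < h) (x : EuclideanSpace ℝ (Fin d)) :
    |(∫ y : EuclideanSpace ℝ (Fin d), (h ^ d)⁻¹ * K (h⁻¹ • (x - y)) * f y) - f x|
      ≤ lam * h ^ γ * ∫ z : EuclideanSpace ℝ (Fin d), ‖z‖ ^ γ * |K z| := by
  have hsubst := integral_rescaled_kernel_mul volume K f x hh
  rw [finrank_euclideanSpace_fin] at hsubst
  rw [hsubst]
  exact abs_integral_kernel_mul_comp_sub_le hγ hh.le hK1 hKmom hfH x

theorem stmt18 (d : ℕ) (hd : 1 ≤ d) (γ lam : ℝ) (hγ : 0 < γ) (hγ' : γ ≤ 1) (hlam : 0 < lam)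
    (K : EuclideanSpace ℝ (Fin d) → ℝ) (hK : Integrable K)
    (hK1 : (∫ z, K z) = 1)
    (hKmom : Integrable (fun z : EuclideanSpace ℝ (Fin d) => ‖z‖ ^ γ * |K z|))
    (f : EuclideanSpace ℝ (Fin d) → ℝ) (C : ℝ) (hfb : ∀ x, |f x| ≤ C)
    (hfH : ∀ x y : EuclideanSpace ℝ (Fin d), |f y - f x| ≤ lam * ‖y - x‖ ^ γ)
    (h : ℝ) (hh : 0 < h) (x : EuclideanSpace ℝ (Fin d)) :
    |(∫ y : EuclideanSpace ℝ (Fin d), (h ^ d)⁻¹ * K (h⁻¹ • (x - y)) * f y) - f x|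
      ≤ lam * h ^ γ * ∫ z : EuclideanSpace ℝ (Fin d), ‖z‖ ^ γ * |K z| :=
  stmt18_general d γ lam hγ K hK1 hKmom f hfH h hh x
end
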